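/- Let T > 0, let k : [0,T] → ℝ be continuously differentiable, and for λ > 0 define G_λ(u) := λ·k(u)·sin(u/λ). Then for every continuous φ : [0,T] → ℝ, ∫₀ᵀ φ(u)·(G_λ′(u))² du → (1/2)∫₀ᵀ φ(u)·k(u)² du as λ → 0⁺. In particular G_λ → 0 uniformly, while (G_λ′)² converges weakly to k²/2 rather than to 0. -/

import Mathlib

/-!
Expanding `G_λ' = λ k' sin(u/λ) + k cos(u/λ)` and using `cos² x = (1 + cos 2x)/2`, the integrand
`φ (G_λ')²` is `φ k²/2`, plus the oscillating term `(φ k²/2) cos(2u/λ)`, plus `λ` times a term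
dominated by an integrable function. The oscillating integral tends to `0` by the
Riemann–Lebesgue lemma and the last one is `O(λ)`. Uniform convergence `G_λ → 0` is just
`|G_λ| ≤ λ sup |k|`.
-/

open MeasureTheory Filter Real Set
open scoped Topology FourierTransform Interval

theorem tendsto_integral_mul_cos_mul_cocompact {f : ℝ → ℝ} (hf : Integrable f) :
    Tendsto (fun w => ∫ u, f u * cos (w * u)) (cocompact ℝ) (𝓝 0) := by
  have hRL := Real.tendsto_integral_exp_smul_cocompact (fun u => (f u : ℂ))
  have hscale := tendsto_cocompact_mul_left₀ (inv_ne_zero two_pi_pos.ne')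
  refine ((Complex.continuous_re.tendsto 0).comp (hRL.comp hscale)).congr fun w => ?_
  have hint : Integrable (fun u : ℝ => 𝐞 (-(u * ((2 * π)⁻¹ * w))) • (f u : ℂ)) := by
    simpa [real_inner_comm, mul_comm] using
      (Real.fourierIntegral_convergent_iff (V := ℝ) ((2 * π)⁻¹ * w)).2 hf.ofReal
  have hre := integral_re hint
  simp only [Function.comp_apply, RCLike.re_to_complex] at hre ⊢
  rw [← hre]
  congr 1 with u
  have hphase : 2 * π * -(u * ((2 * π)⁻¹ * w)) = -(w * u) := by field_simp
  rw [Circle.smul_def, Real.fourierChar_apply, smul_eq_mul, Complex.re_mul_ofReal,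
    Complex.exp_ofReal_mul_I_re, hphase, cos_neg, mul_comm]

theorem tendsto_intervalIntegral_mul_cos_mul_cocompact {f : ℝ → ℝ} {a b : ℝ}
    (hf : IntervalIntegrable f volume a b) :
    Tendsto (fun w => ∫ u in a..b, f u * cos (w * u)) (cocompact ℝ) (𝓝 0) := by
  have hRL := tendsto_integral_mul_cos_mul_cocompact
    (hf.def'.integrable_indicator (f := f) measurableSet_uIoc)
  rw [tendsto_zero_iff_norm_tendsto_zero] at hRL ⊢
  refine hRL.congr fun w => ?_
  rw [intervalIntegral.norm_integral_eq_norm_integral_uIoc, ← integral_indicator measurableSet_uIoc]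
  congr 2 with u
  by_cases hu : u ∈ Ι a b <;> simp [hu]

theorem tendsto_intervalIntegral_mul_cos_div_nhdsNE {f : ℝ → ℝ} {a b c : ℝ}
    (hf : IntervalIntegrable f volume a b) (hc : c ≠ 0) :
    Tendsto (fun l => ∫ u in a..b, f u * cos (c * (u / l))) (𝓝[≠] 0) (𝓝 0) := by
  have hfreq : Tendsto (fun l : ℝ => c * l⁻¹) (𝓝[≠] 0) (cocompact ℝ) :=
    (tendsto_cocompact_mul_left₀ hc).comp
      (Metric.cobounded_eq_cocompact (α := ℝ) ▸ tendsto_inv₀_nhdsNE_zero)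
  refine ((tendsto_intervalIntegral_mul_cos_mul_cocompact hf).comp hfreq).congr fun l => ?_
  simp only [Function.comp_apply, div_eq_inv_mul, mul_assoc]

theorem tendsto_intervalIntegral_smul_of_norm_le {E : Type*} [NormedAddCommGroup E]
    [NormedSpace ℝ E] {F : ℝ → ℝ → E} {g : ℝ → ℝ} {a b : ℝ}
    (hg : IntervalIntegrable g volume a b) (hF : ∀ᶠ l in 𝓝 0, ∀ u ∈ Ι a b, ‖F l u‖ ≤ g u) :
    Tendsto (fun l => ∫ u in a..b, l • F l u) (𝓝 0) (𝓝 0) := by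
  have hlim : Tendsto (fun l : ℝ => ‖l‖ * ∫ u in Ι a b, g u) (𝓝 0) (𝓝 0) := by
    simpa using ((by fun_prop : Continuous fun l : ℝ => ‖l‖ * ∫ u in Ι a b, g u).tendsto 0)
  refine squeeze_zero_norm' ?_ hlim
  filter_upwards [hF] with l hl
  rw [intervalIntegral.integral_smul, norm_smul,
    intervalIntegral.norm_integral_eq_norm_integral_uIoc]
  gcongr
  exact norm_integral_le_of_norm_le hg.def'
    ((ae_restrict_iff' measurableSet_uIoc).2 (ae_of_all _ hl))

theorem hasDerivAt_mul_mul_sin_div {k : ℝ → ℝ} {k' u : ℝ} (hk : HasDerivAt k k' u) {l : ℝ}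
    (hl : l ≠ 0) :
    HasDerivAt (fun v => l * k v * sin (v / l)) (l * k' * sin (u / l) + k u * cos (u / l)) u := by
  refine ((hk.const_mul l).mul ((hasDerivAt_id' u).div_const l).sin).congr_deriv ?_
  field_simp

theorem tendstoUniformlyOn_mul_mul_sin_div {k : ℝ → ℝ} {s : Set ℝ} (hs : IsCompact s)
    (hk : ContinuousOn k s) :
    TendstoUniformlyOn (fun (l : ℝ) (u : ℝ) => l * k u * sin (u / l)) (fun _ => 0) (𝓝 0) s := by
  obtain ⟨C, hC⟩ := hs.exists_bound_of_continuousOn hk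
  have hlim : Tendsto (fun l : ℝ => |l| * C) (𝓝 0) (𝓝 0) := by
    simpa using ((by fun_prop : Continuous fun l : ℝ => |l| * C).tendsto 0)
  rw [Metric.tendstoUniformlyOn_iff]
  intro ε hε
  filter_upwards [hlim.eventually (gt_mem_nhds hε)] with l hl u hu
  calc dist 0 (l * k u * sin (u / l)) = |l| * |k u| * |sin (u / l)| := by
        rw [dist_zero_left, norm_eq_abs, abs_mul, abs_mul]
    _ ≤ |l| * |k u| := mul_le_of_le_one_right (by positivity) (abs_sin_le_one _)
    _ ≤ |l| * C := by gcongr; exact (norm_eq_abs _).symm.trans_le (hC u hu)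
    _ < ε := hl

theorem tendsto_intervalIntegral_mul_deriv_mul_mul_sin_div_sq {k : ℝ → ℝ} (hk : ContDiff ℝ 1 k)
    {φ : ℝ → ℝ} {a b : ℝ} (hφ : IntervalIntegrable φ volume a b) :
    Tendsto (fun l => ∫ u in a..b, φ u * (deriv (fun v => l * k v * sin (v / l)) u) ^ 2)
      (𝓝[≠] 0) (𝓝 ((1 / 2) * ∫ u in a..b, φ u * k u ^ 2)) := by
  have hkc : Continuous k := hk.continuous
  have hderiv (l : ℝ) (hl : l ≠ 0) (u : ℝ) :
      deriv (fun v => l * k v * sin (v / l)) u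
        = l * deriv k u * sin (u / l) + k u * cos (u / l) :=
    (hasDerivAt_mul_mul_sin_div ((hk.differentiable one_ne_zero) u).hasDerivAt hl).deriv
  set R : ℝ → ℝ → ℝ := fun l u =>
    φ u * (l * deriv k u ^ 2 * sin (u / l) ^ 2 + 2 * deriv k u * k u * sin (u / l) * cos (u / l))
  have hφk : IntervalIntegrable (fun u => φ u * k u ^ 2) volume a b :=
    hφ.mul_continuousOn (hkc.pow 2).continuousOn
  have hsplit : ∀ l ≠ 0,
      ∫ u in a..b, φ u * (deriv (fun v => l * k v * sin (v / l)) u) ^ 2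
        = (1 / 2) * (∫ u in a..b, φ u * k u ^ 2)
          + (1 / 2) * (∫ u in a..b, φ u * k u ^ 2 * cos (2 * (u / l)))
          + ∫ u in a..b, l * R l u := by
    intro l hl
    have hosc : IntervalIntegrable (fun u => φ u * k u ^ 2 * cos (2 * (u / l))) volume a b :=
      hφk.mul_continuousOn (by fun_prop)
    have hrest : IntervalIntegrable (fun u => l * R l u) volume a b :=
      (hφ.mul_continuousOn (by fun_prop)).const_mul l
    rw [← intervalIntegral.integral_const_mul, ← intervalIntegral.integral_const_mul,
      ← intervalIntegral.integral_add (hφk.const_mul _) (hosc.const_mul _),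
      ← intervalIntegral.integral_add ((hφk.const_mul _).add (hosc.const_mul _)) hrest]
    refine intervalIntegral.integral_congr fun u _ => ?_
    simp only [R, hderiv l hl u]
    linear_combination (φ u * k u ^ 2) * cos_sq (u / l)
  have hR : ∀ᶠ l in 𝓝 (0 : ℝ), ∀ u ∈ Ι a b,
      ‖R l u‖ ≤ |φ u| * (deriv k u ^ 2 + 2 * |deriv k u| * |k u|) := by
    filter_upwards [Icc_mem_nhds (neg_lt_zero.2 one_pos) one_pos] with l hl u _
    have hl1 : |l| ≤ 1 := abs_le.2 hl
    rw [norm_eq_abs, abs_mul]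
    gcongr
    calc _ ≤ |l * deriv k u ^ 2 * sin (u / l) ^ 2|
          + |2 * deriv k u * k u * sin (u / l) * cos (u / l)| := abs_add_le _ _
      _ = |l| * deriv k u ^ 2 * sin (u / l) ^ 2
          + 2 * |deriv k u| * |k u| * |sin (u / l)| * |cos (u / l)| := by
        simp only [abs_mul, abs_pow, sq_abs, abs_two]
      _ ≤ 1 * deriv k u ^ 2 * 1 + 2 * |deriv k u| * |k u| * 1 * 1 := by
        gcongr
        exacts [sin_sq_le_one _, abs_sin_le_one _, abs_cos_le_one _]
      _ = _ := by ring
  have hosc := (tendsto_intervalIntegral_mul_cos_div_nhdsNE hφk two_ne_zero).const_mul (1 / 2)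
  have hrest : Tendsto (fun l => ∫ u in a..b, l * R l u) (𝓝[≠] 0) (𝓝 0) :=
    (tendsto_intervalIntegral_smul_of_norm_le
      (hφ.abs.mul_continuousOn (by fun_prop)) hR).mono_left nhdsWithin_le_nhds
  have hlim :=
    (tendsto_const_nhds (x := (1 / 2) * ∫ u in a..b, φ u * k u ^ 2)).add hosc |>.add hrest
  rw [mul_zero, add_zero, add_zero] at hlim
  exact hlim.congr' (eventually_nhdsWithin_of_forall fun l hl => (hsplit l hl).symm)

theorem burnett_plane_wave_weak_limit_general (T : ℝ) (k : ℝ → ℝ)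
    (hk : ContDiff ℝ 1 k) :
    (∀ φ : ℝ → ℝ, Continuous φ →
      Tendsto
        (fun l : ℝ =>
          ∫ u in (0 : ℝ)..T, φ u * (deriv (fun v => l * k v * Real.sin (v / l)) u) ^ 2)
        (𝓝[>] 0) (𝓝 ((1 / 2) * ∫ u in (0 : ℝ)..T, φ u * (k u) ^ 2))) ∧
    TendstoUniformlyOn (fun (l : ℝ) (u : ℝ) => l * k u * Real.sin (u / l))
      (fun _ => 0) (𝓝[>] 0) (Set.Icc 0 T) := by
  refine ⟨fun φ hφ => ?_, fun U hU => ?_⟩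
  · exact (tendsto_intervalIntegral_mul_deriv_mul_mul_sin_div_sq hk (hφ.intervalIntegrable 0 T)
      ).mono_left (nhdsWithin_mono _ fun l hl => ne_of_gt hl)
  · exact (tendstoUniformlyOn_mul_mul_sin_div isCompact_Icc hk.continuous.continuousOn U hU
      ).filter_mono nhdsWithin_le_nhds

/-- Burnett's plane-wave example: with `G_λ(u) = λ k(u) sin(u/λ)` for `k` continuously
differentiable, for every continuous `φ` one has
`∫₀ᵀ φ (G_λ')² → (1/2)∫₀ᵀ φ k²` as `λ → 0⁺`; moreover `G_λ → 0` uniformly on `[0,T]`. -/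
theorem burnett_plane_wave_weak_limit (T : ℝ) (hT : 0 < T) (k : ℝ → ℝ)
    (hk : ContDiff ℝ 1 k) :
    (∀ φ : ℝ → ℝ, Continuous φ →
      Tendsto
        (fun l : ℝ =>
          ∫ u in (0 : ℝ)..T, φ u * (deriv (fun v => l * k v * Real.sin (v / l)) u) ^ 2)
        (𝓝[>] 0) (𝓝 ((1 / 2) * ∫ u in (0 : ℝ)..T, φ u * (k u) ^ 2))) ∧
    TendstoUniformlyOn (fun (l : ℝ) (u : ℝ) => l * k u * Real.sin (u / l))
      (fun _ => 0) (𝓝[>] 0) (Set.Icc 0 T) :=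
  burnett_plane_wave_weak_limit_general T k hk
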